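/- arXiv:0705.0951 — 3 statements merged into one kernel-verified Lean document; each statement's English description precedes it below -/
import Mathlib

section
/- Let Λ be an odd unimodular lattice of signature (21,2), η ∈ Λ with η·η = 3 whose orthogonal complement Λ₀ is even, and let Γ̂ be the stabilizer of ℤη in O(Λ). Then any element of Γ̂ acting trivially on Λ₀ fixes η; consequently Γ̂ acts faithfully on Λ₀. -/
/-!
STATEMENT 1: Let Λ be an odd unimodular lattice of signature (21,2), η ∈ Λ with
η·η = 3 whose orthogonal complement Λ₀ is even, and let Γ̂ be the stabilizer of ℤη
in O(Λ). Then any element of Γ̂ acting trivially on Λ₀ fixes η; consequently Γ̂ acts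
faithfully on Λ₀.
-/

open Matrix

/-- The bilinear form associated to a Gram matrix `g`. -/
def B (g : Matrix (Fin 23) (Fin 23) ℤ) (x y : Fin 23 → ℤ) : ℤ := x ⬝ᵥ g.mulVec y

/-- `g` has signature (21,2): over ℝ it is congruent to diag(1²¹, (-1)²). -/
def HasSig212 (g : Matrix (Fin 23) (Fin 23) ℤ) : Prop :=
  ∃ P : Matrix (Fin 23) (Fin 23) ℝ, IsUnit P.det ∧
    Pᵀ * (g.map (fun n : ℤ => (n : ℝ))) * P =
      Matrix.diagonal (fun i : Fin 23 => if (i : ℕ) < 21 then (1 : ℝ) else -1)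

/-!
If `φ η = c • η` and `φ` fixes `η^⊥`, applying `φ` to `3 • x - B(x, η) • η ∈ η^⊥` gives
`3 • (φ x - x) = (B(x, η) (c - 1)) • η`, and `c = ±1` because `φ` is an isometry.
For `c = -1` this says `3 ∣ 2 B(x, η) η` for every `x`. But `η` is nonzero mod `3`
(else `9 ∣ B(η, η) = 3`), so by unimodularity some `x` has `3 ∤ B(x, η)`, a contradiction.
Hence `c = 1`, and `3 • φ x = 3 • x` forces `φ x = x`.
-/

open LinearMap (BilinForm)

namespace LinearMap.BilinForm

variable {R M : Type*} [CommRing R] [AddCommGroup M] [Module R M]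

theorem apply_smul_sub_smul_self (b : BilinForm R M) (x η : M) :
    b (b η η • x - b x η • η) η = 0 := by
  simp only [sub_left, smul_left]
  ring

theorem smul_apply_eq_of_forall_orthogonal {b : BilinForm R M} {φ : M →ₗ[R] M} {η : M}
    {c : R} (hc : φ η = c • η) (hfix : ∀ x, b x η = 0 → φ x = x) (x : M) :
    b η η • φ x = b η η • x + (b x η * (c - 1)) • η := by
  have h := hfix _ (b.apply_smul_sub_smul_self x η)
  rw [map_sub, map_smul, map_smul, hc] at h
  linear_combination (norm := module) h

theorem mul_self_eq_one_of_apply_eq_smul [IsDomain R] {b : BilinForm R M}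
    {φ : M →ₗ[R] M} {η : M} {c : R} (hiso : b (φ η) (φ η) = b η η) (hη : b η η ≠ 0)
    (hc : φ η = c • η) : c * c = 1 := by
  rw [hc, smul_left, smul_right, ← mul_assoc] at hiso
  exact mul_right_cancel₀ hη (hiso.trans (one_mul _).symm)

end LinearMap.BilinForm

namespace Matrix

variable {ι R : Type*} [Fintype ι] [CommRing R]

theorem exists_not_dvd_apply_of_not_mul_self_dvd {g : Matrix ι ι R} {p : R} {v : ι → R}
    (hv : ¬ p * p ∣ v ⬝ᵥ g *ᵥ v) : ∃ i, ¬ p ∣ v i := by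
  by_contra! h
  choose w hw using h
  obtain rfl : v = p • w := funext hw
  refine hv ⟨w ⬝ᵥ g *ᵥ w, ?_⟩
  simp only [mulVec_smul, dotProduct_smul, smul_dotProduct, smul_eq_mul]
  ring

theorem dvd_apply_of_forall_dvd_mulVec [DecidableEq ι] {g : Matrix ι ι R} (hg : IsUnit g.det)
    {p : R} {v : ι → R} (h : ∀ j, p ∣ (g *ᵥ v) j) (i : ι) : p ∣ v i := by
  rw [← one_mulVec v, ← nonsing_inv_mul g hg, ← mulVec_mulVec]
  exact Finset.dvd_sum fun j _ => dvd_mul_of_dvd_right (h j) _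

theorem exists_not_dvd_dotProduct_mulVec [DecidableEq ι] {g : Matrix ι ι R} (hg : IsUnit g.det)
    {p : R} {v : ι → R} {i : ι} (hi : ¬ p ∣ v i) : ∃ x, ¬ p ∣ x ⬝ᵥ g *ᵥ v := by
  by_contra! h
  exact hi (dvd_apply_of_forall_dvd_mulVec hg (fun j => by simpa using h (Pi.single j 1)) i)

end Matrix

theorem stmt1_general
    (g : Matrix (Fin 23) (Fin 23) ℤ)
    (hunim : IsUnit g.det)
    (η : Fin 23 → ℤ) (hη : B g η η = 3)
    (φ : (Fin 23 → ℤ) ≃ₗ[ℤ] (Fin 23 → ℤ))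
    (hiso : ∀ x y, B g (φ x) (φ y) = B g x y)
    (hstab : ∃ c : ℤ, φ η = c • η)
    (htriv : ∀ x : Fin 23 → ℤ, B g x η = 0 → φ x = x) :
    φ η = η ∧ ∀ x : Fin 23 → ℤ, φ x = x := by
  obtain ⟨c, hc⟩ := hstab
  have hB (x y : Fin 23 → ℤ) : B g x y = toBilin' g x y := (toBilin'_apply' g x y).symm
  have hkey (x : Fin 23 → ℤ) :
      (3 : ℤ) • φ x = (3 : ℤ) • x + (B g x η * (c - 1)) • η := by
    simpa only [← hB, hη, LinearEquiv.coe_coe] using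
      BilinForm.smul_apply_eq_of_forall_orthogonal (φ := φ.toLinearMap) hc
        (fun x hx => htriv x ((hB x η).trans hx)) x
  have hc1 : c = 1 := by
    have hc2 := BilinForm.mul_self_eq_one_of_apply_eq_smul (b := toBilin' g)
      (by simpa only [← hB, LinearEquiv.coe_coe] using hiso η η) (by rw [← hB, hη]; decide) hc
    obtain ⟨rfl, -⟩ | ⟨rfl, -⟩ := Int.mul_eq_one_iff_eq_one_or_neg_one.mp hc2
    · rfl
    obtain ⟨i, hi⟩ := exists_not_dvd_apply_of_not_mul_self_dvd (p := 3) (g := g) (v := η)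
      (by rw [← B, hη]; decide)
    obtain ⟨x, hx⟩ := exists_not_dvd_dotProduct_mulVec hunim hi
    have hdvd : (3 : ℤ) ∣ B g x η * (-1 - 1) * η i := ⟨φ x i - x i, by
      have := congrFun (hkey x) i
      simp only [Pi.add_apply, Pi.smul_apply, smul_eq_mul] at this
      linarith⟩
    have h2 : ¬ (3 : ℤ) ∣ -1 - 1 := by decide
    exact (Int.prime_three.not_dvd_mul (Int.prime_three.not_dvd_mul hx h2) hi hdvd).elim
  have hfix (x : Fin 23 → ℤ) : φ x = x :=
    smul_right_injective _ three_ne_zero (by simpa [hc1] using hkey x)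
  exact ⟨hfix η, hfix⟩

theorem stmt1
    -- Λ is a lattice of rank 23 with Gram matrix g, symmetric, odd, unimodular,
    -- of signature (21,2):
    (g : Matrix (Fin 23) (Fin 23) ℤ) (hsymm : g.IsSymm)
    (hodd : ∃ x : Fin 23 → ℤ, Odd (B g x x))
    (hunim : IsUnit g.det)
    (hsig : HasSig212 g)
    -- η ∈ Λ with η·η = 3:
    (η : Fin 23 → ℤ) (hη : B g η η = 3)
    -- the orthogonal complement Λ₀ of η is even:
    (heven : ∀ x : Fin 23 → ℤ, B g x η = 0 → Even (B g x x))
    -- φ is an element of O(Λ):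
    (φ : (Fin 23 → ℤ) ≃ₗ[ℤ] (Fin 23 → ℤ))
    (hiso : ∀ x y, B g (φ x) (φ y) = B g x y)
    -- φ stabilizes ℤη, i.e. φ ∈ Γ̂:
    (hstab : ∃ c : ℤ, φ η = c • η)
    -- φ acts trivially on Λ₀:
    (htriv : ∀ x : Fin 23 → ℤ, B g x η = 0 → φ x = x) :
    -- then φ fixes η, and consequently φ is the identity (faithfulness of the
    -- Γ̂-action on Λ₀):
    φ η = η ∧ ∀ x : Fin 23 → ℤ, φ x = x :=
  stmt1_general g hunim η hη φ hiso hstab htriv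
end

section
/- Let Λ₀ be an even lattice with a distinguished ambient odd unimodular lattice Λ = Λ₀ ⊥' ℤη (primitive hull) where η·η = 3. If h ∈ Λ₀ satisfies h·h = 6 and η − h is divisible by 3 in Λ, then the map s_h : x ↦ x − (1/3)(x·h)h is an orthogonal transformation of Λ₀ ⊗ ℚ that preserves Λ₀. -/
/-!
Since `h·h = 6`, the map `s_h` is the reflection `x ↦ x − (2 (x·h) / (h·h)) h`, an isometry of any
symmetric bilinear form; it maps `η^⊥` into itself because `h ⊥ η`. It preserves `Λ₀`
because, writing `η − h = 3w`, every `x ∈ Λ₀` has `x·h = x·η − 3 (x·w) = −3 (x·w)`, so the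
coefficient `(1/3)(x·h)` is an integer.
-/

open Matrix

/-- The bilinear form extended to Λ ⊗ ℚ. -/
def Bq (g : Matrix (Fin 23) (Fin 23) ℤ) (x y : Fin 23 → ℚ) : ℚ :=
  x ⬝ᵥ (g.map (fun n : ℤ => (n : ℚ))).mulVec y

/-- Scalar extension ℤ²³ → ℚ²³. -/
def toQ (x : Fin 23 → ℤ) : Fin 23 → ℚ := fun i => (x i : ℚ)

namespace LinearMap.BilinForm

variable {R M : Type*} [CommRing R] [AddCommGroup M] [Module R M] (F : LinearMap.BilinForm R M)

theorem apply_sub_smul_sub_smul_of_mul_apply_self_eq_two (hF : F.IsSymm) {h : M} {a : R}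
    (ha : a * F h h = 2) (x y : M) :
    F (x - (a * F x h) • h) (y - (a * F y h) • h) = F x y := by
  simp only [map_sub, map_smul, LinearMap.sub_apply, LinearMap.smul_apply, smul_eq_mul,
    hF.eq h y]
  linear_combination (a * F x h * F y h) * ha

theorem apply_sub_smul_eq_zero {x h η : M} (hx : F x η = 0) (hh : F h η = 0) (c : R) :
    F (x - c • h) η = 0 := by
  simp [hx, hh]

theorem apply_eq_neg_mul_of_sub_eq_nsmul {x h η w : M} {n : ℕ} (hx : F x η = 0)
    (hw : η - h = n • w) : F x h = -(n * F x w) := by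
  have := congrArg (F x) hw
  simp only [map_sub, map_nsmul, hx, nsmul_eq_mul] at this
  linear_combination -this

end LinearMap.BilinForm

theorem Bq_eq_toBilin' (g : Matrix (Fin 23) (Fin 23) ℤ) (x y : Fin 23 → ℚ) :
    Bq g x y = (g.map (fun n : ℤ => (n : ℚ))).toBilin' x y :=
  (toBilin'_apply' _ _ _).symm

theorem B_eq_toBilin' (g : Matrix (Fin 23) (Fin 23) ℤ) (x y : Fin 23 → ℤ) :
    B g x y = g.toBilin' x y :=
  (toBilin'_apply' _ _ _).symm

theorem Bq_toQ (g : Matrix (Fin 23) (Fin 23) ℤ) (x y : Fin 23 → ℤ) :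
    Bq g (toQ x) (toQ y) = (B g x y : ℚ) := by
  simp [Bq, B, toQ, dotProduct, Matrix.mulVec, Matrix.map]

theorem stmt3_general
    (g : Matrix (Fin 23) (Fin 23) ℤ) (hsymm : g.IsSymm)
    (η : Fin 23 → ℤ)
    -- h is a special vector: h ∈ Λ₀, h·h = 6, and 3 ∣ (η − h) in Λ:
    (h : Fin 23 → ℤ) (hhη : B g h η = 0) (hh : B g h h = 6)
    (hdiv : ∃ w : Fin 23 → ℤ, η - h = 3 • w) :
    -- s_h : x ↦ x − (1/3)(x·h)h on Λ₀ ⊗ ℚ: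
    -- (a) it maps Λ₀ ⊗ ℚ to itself,
    (∀ x : Fin 23 → ℚ, Bq g x (toQ η) = 0 →
        Bq g (x - ((1/3) * Bq g x (toQ h)) • toQ h) (toQ η) = 0) ∧
    -- (b) it is orthogonal on Λ₀ ⊗ ℚ,
    (∀ x y : Fin 23 → ℚ, Bq g x (toQ η) = 0 → Bq g y (toQ η) = 0 →
        Bq g (x - ((1/3) * Bq g x (toQ h)) • toQ h)
             (y - ((1/3) * Bq g y (toQ h)) • toQ h) = Bq g x y) ∧
    -- (c) it preserves the lattice Λ₀:
    (∀ x : Fin 23 → ℤ, B g x η = 0 → ∃ y : Fin 23 → ℤ, B g y η = 0 ∧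
        toQ y = toQ x - ((1/3) * Bq g (toQ x) (toQ h)) • toQ h) := by
  have hhηq : Bq g (toQ h) (toQ η) = 0 := by rw [Bq_toQ, hhη, Int.cast_zero]
  have hhq : (1/3 : ℚ) * Bq g (toQ h) (toQ h) = 2 := by rw [Bq_toQ, hh]; norm_num
  have hsymmq : (g.map (fun n : ℤ => (n : ℚ))).toBilin'.IsSymm :=
    isSymm_toBilin'_iff_isSymm.2 (hsymm.map _)
  refine ⟨fun x hx => ?_, fun x y _ _ => ?_, fun x hx => ?_⟩
  · simp only [Bq_eq_toBilin'] at hx hhηq ⊢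
    exact LinearMap.BilinForm.apply_sub_smul_eq_zero _ hx hhηq _
  · simp only [Bq_eq_toBilin'] at hhq ⊢
    exact LinearMap.BilinForm.apply_sub_smul_sub_smul_of_mul_apply_self_eq_two _ hsymmq hhq x y
  · obtain ⟨w, hw⟩ := hdiv
    have hxh : B g x h = -(3 * B g x w) := by
      simp only [B_eq_toBilin'] at hx ⊢
      exact LinearMap.BilinForm.apply_eq_neg_mul_of_sub_eq_nsmul _ hx hw
    refine ⟨x + B g x w • h, ?_, ?_⟩
    · rw [B_eq_toBilin'] at hx hhη ⊢
      simp only [map_add, map_smul, LinearMap.add_apply, LinearMap.smul_apply, hx, hhη,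
        smul_zero, add_zero]
    · funext i
      simp only [Bq_toQ, hxh, toQ, Pi.sub_apply, Pi.smul_apply, Pi.add_apply, smul_eq_mul]
      push_cast
      ring

theorem stmt3
    (g : Matrix (Fin 23) (Fin 23) ℤ) (hsymm : g.IsSymm)
    (hodd : ∃ x : Fin 23 → ℤ, Odd (B g x x))
    (hunim : IsUnit g.det)
    (hsig : HasSig212 g)
    (η : Fin 23 → ℤ) (hη : B g η η = 3)
    (heven : ∀ x : Fin 23 → ℤ, B g x η = 0 → Even (B g x x))
    -- h is a special vector: h ∈ Λ₀, h·h = 6, and 3 ∣ (η − h) in Λ: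
    (h : Fin 23 → ℤ) (hhη : B g h η = 0) (hh : B g h h = 6)
    (hdiv : ∃ w : Fin 23 → ℤ, η - h = 3 • w) :
    -- s_h : x ↦ x − (1/3)(x·h)h on Λ₀ ⊗ ℚ:
    -- (a) it maps Λ₀ ⊗ ℚ to itself,
    (∀ x : Fin 23 → ℚ, Bq g x (toQ η) = 0 →
        Bq g (x - ((1/3) * Bq g x (toQ h)) • toQ h) (toQ η) = 0) ∧
    -- (b) it is orthogonal on Λ₀ ⊗ ℚ,
    (∀ x y : Fin 23 → ℚ, Bq g x (toQ η) = 0 → Bq g y (toQ η) = 0 →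
        Bq g (x - ((1/3) * Bq g x (toQ h)) • toQ h)
             (y - ((1/3) * Bq g y (toQ h)) • toQ h) = Bq g x y) ∧
    -- (c) it preserves the lattice Λ₀:
    (∀ x : Fin 23 → ℤ, B g x η = 0 → ∃ y : Fin 23 → ℤ, B g y η = 0 ∧
        toQ y = toQ x - ((1/3) * Bq g (toQ x) (toQ h)) • toQ h) :=
  stmt3_general g hsymm η h hhη hh hdiv
end

section
/- Let Λ = 2E₈ ⊥ 2U ⊥ 3I with η = ε₁ + ε₂ + ε₃ and Λ₀ = η^⊥. Any two distinct special vectors h, h' ∈ Λ₀ (i.e. h·h = h'·h' = 6 and η−h, η−h' divisible by 3 in Λ) spanning a positive definite sublattice satisfy h·h' = −3. -/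
open Matrix

/-- Edges of the E₈ Dynkin diagram (chain 0-1-2-3-4-5-6 with node 7 attached to node 2). -/
def e8Edges : List (Fin 8 × Fin 8) := [(0,1),(1,2),(2,3),(3,4),(4,5),(5,6),(2,7)]

/-- Gram matrix of the E₈ root lattice. -/
def E8 : Matrix (Fin 8) (Fin 8) ℤ := Matrix.of fun i j =>
  if i = j then 2 else if (i, j) ∈ e8Edges ∨ (j, i) ∈ e8Edges then -1 else 0

/-- Gram matrix of the hyperbolic plane U. -/
def U2 : Matrix (Fin 2) (Fin 2) ℤ := !![0, 1; 1, 0]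

/-- Index type for Λ = 2E₈ ⊥ 2U ⊥ 3I (rank 23). -/
abbrev Idx := (Fin 8 ⊕ Fin 8) ⊕ (Fin 2 ⊕ Fin 2) ⊕ Fin 3

/-- Gram matrix of Λ = 2E₈ ⊥ 2U ⊥ 3I. -/
def G : Matrix Idx Idx ℤ := Matrix.of fun i j =>
  match i, j with
  | Sum.inl (Sum.inl a), Sum.inl (Sum.inl b) => E8 a b
  | Sum.inl (Sum.inr a), Sum.inl (Sum.inr b) => E8 a b
  | Sum.inr (Sum.inl (Sum.inl a)), Sum.inr (Sum.inl (Sum.inl b)) => U2 a b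
  | Sum.inr (Sum.inl (Sum.inr a)), Sum.inr (Sum.inl (Sum.inr b)) => U2 a b
  | Sum.inr (Sum.inr a), Sum.inr (Sum.inr b) => if a = b then 1 else 0
  | _, _ => 0

/-- The bilinear form of Λ. -/
def Bf (x y : Idx → ℤ) : ℤ := x ⬝ᵥ G.mulVec y

/-- The generator εₖ of the k-th I-summand. -/
def εv (k : Fin 3) : Idx → ℤ := fun i => match i with
  | Sum.inr (Sum.inr j) => if j = k then 1 else 0
  | _ => 0

/-- η = ε₁ + ε₂ + ε₃. -/
def η : Idx → ℤ := εv 0 + εv 1 + εv 2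

/-- A special vector: an element h of Λ₀ = η^⊥ with h·h = 6 and η − h divisible by 3 in Λ. -/
def IsSpecial (h : Idx → ℤ) : Prop :=
  Bf h η = 0 ∧ Bf h h = 6 ∧ ∃ w : Idx → ℤ, η - h = 3 • w

theorem Bf_eq_toBilin' (x y : Idx → ℤ) : Bf x y = G.toBilin' x y :=
  (Matrix.toBilin'_apply' G x y).symm

theorem G_isSymm : G.IsSymm := by decide

theorem two_smul_η_ne_three_smul (u : Idx → ℤ) : 2 • η ≠ 3 • u := by
  intro h
  have h0 : (2 : ℤ) = 3 * u (Sum.inr (Sum.inr 0)) := by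
    simpa [η, εv] using congrFun h (Sum.inr (Sum.inr 0))
  omega

/-- Positivity on `h ± h'` gives `|h·h'| < 6`, where `h·h' = 6 + 3 (h·v)`; and `h'·h' = 6`
gives `2 (h·v) = -3 (v·v)`, so `3 ∣ h·v`, which leaves only `h·v = -3`. -/
theorem LinearMap.BilinForm.apply_eq_neg_three_of_eq_add_three_smul {M : Type*}
    [AddCommGroup M] {B : LinearMap.BilinForm ℤ M} (hB : B.IsSymm) {h h' v : M}
    (hh : B h h = 6) (hh' : B h' h' = 6) (hv : h' = h + 3 • v)
    (hadd : 0 < B (h + h') (h + h')) (hsub : 0 < B (h - h') (h - h')) :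
    B h h' = -3 := by
  have hvh := hB.eq v h
  have hh'h := hB.eq h' h
  have hhv : B h h' = 6 + 3 * B h v := by
    simp [hv, hh]
  have hnorm : 2 * B h v + 3 * B v v = 0 := by
    rw [hv] at hh'
    simp only [map_add, map_nsmul, LinearMap.add_apply, LinearMap.smul_apply, hh, hvh,
      nsmul_eq_mul, Nat.cast_ofNat] at hh'
    linarith
  simp only [map_add, map_sub, LinearMap.add_apply, LinearMap.sub_apply, hh, hh', hh'h] at hadd hsub
  omega

theorem stmt4 (h h' : Idx → ℤ) (hs : IsSpecial h) (hs' : IsSpecial h') (hne : h ≠ h')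
    -- h and h' span a positive definite sublattice:
    (hpos : ∀ a b : ℤ, a • h + b • h' ≠ 0 → 0 < Bf (a • h + b • h') (a • h + b • h')) :
    Bf h h' = -3 := by
  obtain ⟨-, hhh, w, hw⟩ := hs
  obtain ⟨-, hh'h', w', hw'⟩ := hs'
  have hv : h' = h + 3 • (w - w') := by
    rw [smul_sub, ← hw, ← hw']
    abel
  have hadd : h + h' ≠ 0 := by
    intro h0
    apply two_smul_η_ne_three_smul (w + w')
    rw [smul_add, ← hw, ← hw', eq_neg_of_add_eq_zero_right h0]
    abel
  have hsub : h - h' ≠ 0 := sub_ne_zero.mpr hne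
  simp only [Bf_eq_toBilin'] at hhh hh'h' hpos ⊢
  refine LinearMap.BilinForm.apply_eq_neg_three_of_eq_add_three_smul
    (Matrix.isSymm_toBilin'_iff_isSymm.mpr G_isSymm) hhh hh'h' hv ?_ ?_
  · simpa using hpos 1 1 (by simpa using hadd)
  · simpa [← sub_eq_add_neg] using hpos 1 (-1) (by simpa [← sub_eq_add_neg] using hsub)
end
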